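/- arXiv:2509.12792 — 3 statements merged into one kernel-verified Lean document; each statement's English description precedes it below -/
import Mathlib

section
/- For the unit ball B = {x ∈ ℝⁿ | ‖x‖ ≤ 1} with n ≥ 2 and a parameter α with -1/n ≤ α ≤ 1, the ellipsoid E with center d = -τ·e₁ where τ = (1+nα)/(n+1), and shape matrix R = δ·(I - σ·e₁e₁ᵀ) where δ = n²/(n²-1)·(1-α²) and σ = 2(1+nα)/((n+1)(1+α)), contains the spherical cap B ∩ {x | x₁ ≤ -α}. That is, every x with ‖x‖ ≤ 1 and x₁ ≤ -α satisfies (x-d)ᵀR⁻¹(x-d) ≤ 1. -/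
open Matrix

set_option maxHeartbeats 1000000

lemma vmv_mulVec {n : ℕ} (w v u : Fin n → ℝ) :
    vecMulVec w v *ᵥ u = (v ⬝ᵥ u) • w := by
  funext i
  simp only [Matrix.mulVec, dotProduct, vecMulVec_apply, Pi.smul_apply,
    smul_eq_mul, Finset.sum_mul]
  exact Finset.sum_congr rfl fun k _ => by ring

lemma vmv_mul {n : ℕ} (w v w' v' : Fin n → ℝ) :
    vecMulVec w v * vecMulVec w' v' = (v ⬝ᵥ w') • vecMulVec w v' := by
  ext i j
  simp only [Matrix.mul_apply, vecMulVec_apply, dotProduct,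
    Matrix.smul_apply, smul_eq_mul, Finset.sum_mul]
  exact Finset.sum_congr rfl fun k _ => by ring

/-- The Löwner-John ellipsoid of a spherical cap of the unit ball:
for `n ≥ 2`, `-1/n ≤ α ≤ 1`, every point `x` of the unit ball with `x 0 ≤ -α`
lies in the ellipsoid with center `d = -τ • e₁` and shape matrix
`R = δ • (I - σ • e₁e₁ᵀ)`. -/
theorem loewner_john_cap_containment (n : ℕ) (hn : 2 ≤ n) (α : ℝ)
    (hα₁ : -1 / (n : ℝ) ≤ α) (hα₂ : α ≤ 1)
    (τ σ δ : ℝ)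
    (hτ : τ = (1 + n * α) / (n + 1))
    (hσ : σ = 2 * (1 + n * α) / ((n + 1) * (1 + α)))
    (hδ : δ = (n : ℝ) ^ 2 / ((n : ℝ) ^ 2 - 1) * (1 - α ^ 2))
    (e₁ : Fin n → ℝ) (he₁ : e₁ = Pi.single (⟨0, by omega⟩ : Fin n) 1)
    (d : Fin n → ℝ) (hd : d = -τ • e₁)
    (R : Matrix (Fin n) (Fin n) ℝ)
    (hR : R = δ • ((1 : Matrix (Fin n) (Fin n) ℝ) - σ • vecMulVec e₁ e₁))
    (x : Fin n → ℝ) (hx : x ⬝ᵥ x ≤ 1)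
    (hx1 : x ⟨0, by omega⟩ ≤ -α) :
    (x - d) ⬝ᵥ R⁻¹ *ᵥ (x - d) ≤ 1 := by
  have hn' : (2 : ℝ) ≤ (n : ℝ) := by exact_mod_cast hn
  set i0 : Fin n := ⟨0, by omega⟩
  have hnpos : (0 : ℝ) < n := by linarith
  have hα1' : -1/2 ≤ α := le_trans (by rw [div_le_div_iff₀ (by norm_num) hnpos]; linarith) hα₁
  have h1α : (0:ℝ) < 1 + α := by linarith
  have hnα : (0:ℝ) ≤ 1 + n * α := by
    have := (div_le_iff₀ hnpos).mp hα₁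
    linarith
  rcases eq_or_lt_of_le hα₂ with h1 | h1
  · -- α = 1 : δ = 0, R = 0, R⁻¹ = 0
    have hδ0 : δ = 0 := by rw [hδ, h1]; norm_num
    rw [hR, hδ0, zero_smul, Matrix.inv_zero, Matrix.zero_mulVec, dotProduct_zero]
    norm_num
  · -- main case α < 1
    have hδpos : 0 < δ := by
      rw [hδ]
      have ha : (0:ℝ) < (n:ℝ)^2 - 1 := by nlinarith
      have hb : (0:ℝ) < 1 - α^2 := by nlinarith
      positivity
    have hσpos : 0 ≤ σ := by
      rw [hσ]
      positivity
    have h1σ : 1 - σ = (n - 1) * (1 - α) / ((n + 1) * (1 + α)) := by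
      rw [hσ]
      field_simp
      ring
    have h1σpos : 0 < 1 - σ := by
      rw [h1σ]
      have : (0:ℝ) < (n - 1) * (1 - α) := by nlinarith
      positivity
    set c : ℝ := σ / (1 - σ) with hc
    have hcnn : 0 ≤ c := div_nonneg hσpos h1σpos.le
    have hee : e₁ ⬝ᵥ e₁ = 1 := by rw [he₁, single_dotProduct, Pi.single_eq_same, one_mul]
    set M : Matrix (Fin n) (Fin n) ℝ :=
      δ⁻¹ • ((1 : Matrix (Fin n) (Fin n) ℝ) + c • vecMulVec e₁ e₁) with hM
    have hPP : vecMulVec e₁ e₁ * vecMulVec e₁ e₁ = vecMulVec e₁ e₁ := by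
      rw [vmv_mul, hee, one_smul]
    have hc2 : σ * c = c - σ := by
      rw [hc]; field_simp; ring
    have hRM : R * M = 1 := by
      rw [hR, hM, Matrix.smul_mul, Matrix.mul_smul, smul_smul,
        mul_inv_cancel₀ hδpos.ne', one_smul, sub_mul, Matrix.one_mul,
        Matrix.smul_mul, Matrix.mul_add, Matrix.mul_one, Matrix.mul_smul,
        hPP, smul_add, smul_smul, hc2]
      module
    have hRinv : R⁻¹ = M := Matrix.inv_eq_right_inv hRM
    rw [hRinv]
    set v : Fin n → ℝ := x - d with hv
    set t : ℝ := x i0 with ht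
    have hxe : x ⬝ᵥ e₁ = t := by rw [he₁, dotProduct_single, mul_one]
    have hex : e₁ ⬝ᵥ x = t := by rw [he₁, single_dotProduct, one_mul]
    have hv0 : e₁ ⬝ᵥ v = t + τ := by
      rw [hv, hd, neg_smul, sub_neg_eq_add, dotProduct_add,
        dotProduct_smul, hee, hex, smul_eq_mul, mul_one]
    have hv0' : v ⬝ᵥ e₁ = t + τ := by
      rw [dotProduct_comm]; exact hv0
    have hvv : v ⬝ᵥ v = x ⬝ᵥ x + 2 * τ * t + τ ^ 2 := by
      rw [hv, hd, neg_smul, sub_neg_eq_add]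
      simp only [add_dotProduct, dotProduct_add, smul_dotProduct,
        dotProduct_smul, smul_eq_mul, hee, hxe, hex]
      ring
    have hform : v ⬝ᵥ M *ᵥ v = δ⁻¹ * (v ⬝ᵥ v + c * (t + τ)^2) := by
      rw [hM, Matrix.smul_mulVec, Matrix.add_mulVec, Matrix.one_mulVec,
        Matrix.smul_mulVec, vmv_mulVec, hv0]
      simp only [dotProduct_smul, dotProduct_add, smul_eq_mul, hv0']
      ring
    rw [hform]
    have htle : t ≤ -α := hx1
    have ht2 : t ^ 2 ≤ x ⬝ᵥ x := by
      have hdef : x ⬝ᵥ x = ∑ i, x i * x i := rfl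
      rw [hdef, pow_two]
      exact Finset.single_le_sum (f := fun i => x i * x i)
        (fun i _ => mul_self_nonneg _) (Finset.mem_univ i0)
    have htge : -1 ≤ t := by nlinarith [sq_nonneg (t + 1)]
    have hc' : c = 2 * (1 + n * α) / ((n - 1) * (1 - α)) := by
      rw [hc, h1σ, hσ]
      have hne1 : ((n:ℝ) + 1) * (1 + α) ≠ 0 := by positivity
      have hne2 : ((n:ℝ) - 1) * (1 - α) ≠ 0 := by nlinarith
      field_simp
    have hkey : δ - (1 + 2 * τ * t + τ ^ 2 + c * (t + τ)^2) = -c * ((t + 1) * (t + α)) := by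
      rw [hc', hτ, hδ]
      have hne1 : (n:ℝ) + 1 ≠ 0 := by positivity
      have hne2 : ((n:ℝ) - 1) * (1 - α) ≠ 0 := by nlinarith
      have hne3 : (n:ℝ)^2 - 1 ≠ 0 := by nlinarith
      have hne4 : (n:ℝ) - 1 ≠ 0 := by linarith
      field_simp
      ring
    have hrhs : 0 ≤ -c * ((t + 1) * (t + α)) := by
      have hp : (t + 1) * (t + α) ≤ 0 :=
        mul_nonpos_of_nonneg_of_nonpos (by linarith) (by linarith)
      nlinarith [mul_nonneg hcnn (neg_nonneg.2 hp)]
    have hbound : v ⬝ᵥ v + c * (t + τ)^2 ≤ δ := by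
      rw [hvv]; linarith
    calc δ⁻¹ * (v ⬝ᵥ v + c * (t + τ)^2) ≤ δ⁻¹ * δ :=
          mul_le_mul_of_nonneg_left hbound (inv_nonneg.mpr hδpos.le)
      _ = 1 := inv_mul_cancel₀ hδpos.ne'
end

section
/- For n ≥ 2 and α ∈ (-1/n, 1), the volume ratio of the Löwner-John ellipsoid to the original ellipsoid, which equals δ^(n/2)·√(1-σ) with δ = n²/(n²-1)·(1-α²) and σ = 2(1+nα)/((n+1)(1+α)), is strictly less than 1 when α > 0; i.e., cutting an ellipsoid strictly beyond its center yields a strictly smaller covering ellipsoid. -/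
/-- For `n ≥ 2` and `0 < α < 1`, the volume ratio `δ^(n/2)·√(1-σ)` of the
Löwner-John ellipsoid of a cut strictly beyond the center is strictly less
than 1. -/
theorem loewner_john_volume_ratio_lt_one (n : ℕ) (hn : 2 ≤ n) (α : ℝ)
    (hα₁ : -1 / (n : ℝ) < α) (hα₂ : α < 1) (hαpos : 0 < α)
    (σ δ : ℝ)
    (hσ : σ = 2 * (1 + n * α) / ((n + 1) * (1 + α)))
    (hδ : δ = (n : ℝ) ^ 2 / ((n : ℝ) ^ 2 - 1) * (1 - α ^ 2)) :
    δ ^ ((n : ℝ) / 2) * Real.sqrt (1 - σ) < 1 := by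
  have hn2 : (2:ℝ) ≤ (n:ℝ) := by exact_mod_cast hn
  have hn1 : (0:ℝ) < (n:ℝ) - 1 := by linarith
  have hn1' : (0:ℝ) < (n:ℝ) + 1 := by linarith
  have hnpos : (0:ℝ) < (n:ℝ) := by linarith
  have h1α : (0:ℝ) < 1 - α := by linarith
  have h1α' : (0:ℝ) < 1 + α := by linarith
  set u : ℝ := (n:ℝ) * (1 - α) / ((n:ℝ) + 1) with hu_def
  set v : ℝ := (n:ℝ) * (1 + α) / ((n:ℝ) - 1) with hv_def
  have hu : 0 < u := div_pos (by positivity) hn1'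
  have hv : 0 < v := div_pos (by positivity) hn1
  have hδuv : δ = u * v := by
    rw [hδ, hu_def, hv_def]
    have h1 : (n:ℝ) ^ 2 - 1 ≠ 0 := by nlinarith
    field_simp
    ring
  have hσuv : 1 - σ = u / v := by
    rw [hσ, hu_def, hv_def]
    field_simp
    ring
  have hult : u < 1 := by
    rw [hu_def, div_lt_one hn1']
    nlinarith
  have hδpos : 0 < δ := by rw [hδuv]; positivity
  have hσpos : 0 < 1 - σ := by rw [hσuv]; exact div_pos hu hv
  -- key inequality via log
  have hPpos : 0 < δ ^ n * (1 - σ) := by positivity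
  have hP : δ ^ n * (1 - σ) < 1 := by
    have hlogu : Real.log u < u - 1 := Real.log_lt_sub_one_of_pos hu (ne_of_lt hult)
    have hlogv : Real.log v ≤ v - 1 := Real.log_le_sub_one_of_pos hv
    have hsum : ((n:ℝ) + 1) * (u - 1) + ((n:ℝ) - 1) * (v - 1) = 0 := by
      rw [hu_def, hv_def]
      field_simp
      ring
    have hlog : Real.log (δ ^ n * (1 - σ))
        = ((n:ℝ) + 1) * Real.log u + ((n:ℝ) - 1) * Real.log v := by
      rw [hδuv, hσuv, Real.log_mul (by positivity) (by positivity),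
        Real.log_pow, Real.log_mul hu.ne' hv.ne', Real.log_div hu.ne' hv.ne']
      push_cast
      ring
    have hneg : Real.log (δ ^ n * (1 - σ)) < 0 := by
      rw [hlog]
      nlinarith [hlogu, hlogv, hsum, hn1, hn1']
    exact (Real.log_neg_iff hPpos).mp hneg
  -- conclude
  set L : ℝ := δ ^ ((n:ℝ) / 2) * Real.sqrt (1 - σ) with hL
  have hLnn : 0 ≤ L := by positivity
  have hLsq : L ^ 2 = δ ^ n * (1 - σ) := by
    rw [hL, mul_pow, Real.sq_sqrt hσpos.le,
      ← Real.rpow_natCast (δ ^ ((n:ℝ) / 2)) 2, ← Real.rpow_mul hδpos.le,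
      show (n:ℝ) / 2 * ((2:ℕ):ℝ) = ((n:ℕ):ℝ) by push_cast; ring,
      Real.rpow_natCast]
  nlinarith [hP, hLsq, hLnn]
end

section
/- For n ≥ 2, the map f(α) = (n²/(n²−1))^n (1−α²)^n (1 − 2(1+nα)/((n+1)(1+α))), giving the squared volume-ratio of the cut ellipsoid, satisfies f(0) = (n²/(n²−1))^n · (n−1)/(n+1) < 1; i.e., a central cut (α = 0) of an ellipsoid reduces the covering ellipsoid's volume by a factor strictly less than 1. -/
/-- Central-cut volume reduction of the ellipsoid method: at `α = 0` the
squared volume-ratio equals `(n²/(n²−1))ⁿ · (n−1)/(n+1)`, which is strictly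
less than 1 for every integer `n ≥ 2`. -/
theorem central_cut_volume_reduction (n : ℕ) (hn : 2 ≤ n)
    (f : ℝ → ℝ)
    (hf : ∀ α : ℝ, f α = ((n : ℝ) ^ 2 / ((n : ℝ) ^ 2 - 1)) ^ n * (1 - α ^ 2) ^ n *
      (1 - 2 * (1 + n * α) / ((n + 1) * (1 + α)))) :
    f 0 = ((n : ℝ) ^ 2 / ((n : ℝ) ^ 2 - 1)) ^ n * (((n : ℝ) - 1) / ((n : ℝ) + 1)) ∧
    f 0 < 1 := by
  have hn2 : (2 : ℝ) ≤ (n : ℝ) := by exact_mod_cast hn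
  have hc : (0 : ℝ) < (n : ℝ) ^ 2 - 1 := by nlinarith
  have hnp1 : (0 : ℝ) < (n : ℝ) + 1 := by linarith
  have heq : f 0 = ((n : ℝ) ^ 2 / ((n : ℝ) ^ 2 - 1)) ^ n * (((n : ℝ) - 1) / ((n : ℝ) + 1)) := by
    rw [hf 0]
    have : (1 : ℝ) - 2 * (1 + (n : ℝ) * 0) / (((n : ℝ) + 1) * (1 + 0)) =
        ((n : ℝ) - 1) / ((n : ℝ) + 1) := by
      field_simp
      ring
    rw [this]
    ring_nf
  refine ⟨heq, ?_⟩
  set c : ℝ := (n : ℝ) ^ 2 - 1 with hcdef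
  set x : ℝ := 1 / c with hxdef
  have hx0 : 0 < x := by positivity
  have hx1 : x < 1 := by
    rw [hxdef, div_lt_one hc]; nlinarith
  have hA : (n : ℝ) ^ 2 / c = 1 + x := by
    field_simp [hxdef]
    rw [hxdef, mul_add, mul_one_div_cancel hc.ne']; linarith [hcdef]
  -- Bernoulli: 1 - n*x ≤ (1-x)^n
  have hbern : 1 - (n : ℝ) * x ≤ (1 - x) ^ n := by
    have := one_add_mul_le_pow (a := -x) (by linarith) n
    simpa [mul_comm, ← sub_eq_add_neg] using this
  have hpos1 : (0 : ℝ) < 1 + x := by linarith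
  have hApos : (0 : ℝ) < (1 + x) ^ n := by positivity
  -- key: (1+x)^n * (1 - n*x) < 1
  have hkey : (1 + x) ^ n * (1 - (n : ℝ) * x) < 1 := by
    have h1 : (1 + x) ^ n * (1 - (n : ℝ) * x) ≤ (1 + x) ^ n * (1 - x) ^ n :=
      mul_le_mul_of_nonneg_left hbern (le_of_lt hApos)
    have h2 : (1 + x) ^ n * (1 - x) ^ n = (1 - x ^ 2) ^ n := by
      rw [← mul_pow]; ring_nf
    have h3 : (1 - x ^ 2 : ℝ) ^ n < 1 := by
      apply pow_lt_one₀ (by nlinarith) (by nlinarith)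
      omega
    calc (1 + x) ^ n * (1 - (n : ℝ) * x) ≤ (1 - x ^ 2) ^ n := by rw [← h2]; exact h1
      _ < 1 := h3
  -- (n-1)/(n+1) ≤ 1 - n*x
  have hstep : ((n : ℝ) - 1) / ((n : ℝ) + 1) ≤ 1 - (n : ℝ) * x := by
    have h1 : (1 : ℝ) - (n : ℝ) * x = (c - n) / c := by
      rw [hxdef]; field_simp
    rw [h1, div_le_div_iff₀ hnp1 hc]
    nlinarith [sq_nonneg ((n : ℝ) - 2)]
  have : f 0 ≤ (1 + x) ^ n * (1 - (n : ℝ) * x) := by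
    rw [heq, hA]
    exact mul_le_mul_of_nonneg_left hstep (le_of_lt hApos)
  linarith
end
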